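/- arXiv:1710.09254 — 3 statements merged into one kernel-verified Lean document; each statement's English description precedes it below -/
import Mathlib

section
/- Let s ≥ 1, let b_1, …, b_s ≥ 0, and let N : ℕ^s → ℝ be a nonnegative function of multi-indices such that for every multi-index ν ≠ 0, N(ν) ≤ ∑_{m ≤ ν, m ≠ ν} (∏_{j=1}^s binom(ν_j, m_j)) (∏_{j=1}^s b_j^{ν_j − m_j}) N(m), where the sum is over all multi-indices m with m_j ≤ ν_j for all j and m ≠ ν. Then for every multi-index ν, N(ν) ≤ Λ_{|ν|} · (∏_{j=1}^s b_j^{ν_j}) · N(0), where |ν| = ∑_j ν_j and the sequence (Λ_n) is defined recursively by Λ_0 = 1 and Λ_n = ∑_{i=0}^{n−1} binom(n,i) Λ_i for n ≥ 1. -/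
/-!
Strong induction on `ν` in the product order. Bounding each `N m`, `m < ν`, in the recursion by
the induction hypothesis, the powers of `b` combine to `∏ j, b j ^ ν j`. Grouping the `m` by
`i = |m|`, the multivariate Vandermonde identity
`∑_{m ≤ ν, |m| = i} ∏ j, (ν j).choose (m j) = |ν|.choose i`
turns what remains into `∑_{i < |ν|} |ν|.choose i * Λ i = Λ |ν|`.
-/

open Finset Polynomial

section

variable {ι : Type*} [Fintype ι] [DecidableEq ι]

theorem sum_Iic_filter_prod_choose (ν : ι → ℕ) (i : ℕ) :
    ∑ m ∈ Iic ν with ∑ j, m j = i, ∏ j, (ν j).choose (m j) = (∑ j, ν j).choose i := by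
  have hIic : Iic ν = Fintype.piFinset fun j => range (ν j + 1) := by
    ext m
    simp [Pi.le_def]
  -- compare coefficients of `X ^ i` in `∏ j, (X + 1) ^ ν j = (X + 1) ^ ∑ j, ν j`
  have hgen : ∑ m ∈ Iic ν, C (∏ j, (ν j).choose (m j)) * X ^ ∑ j, m j =
      (X + 1 : ℕ[X]) ^ ∑ j, ν j := by
    simp_rw [← prod_pow_eq_pow_sum, add_pow, one_pow, mul_one, prod_univ_sum, hIic, map_prod,
      ← prod_mul_distrib]
    simp [mul_comm]
  have := congrArg (coeff · i) hgen
  simp only [finsetSum_coeff, coeff_C_mul_X_pow, coeff_X_add_one_pow, Nat.cast_id] at this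
  rw [sum_filter, ← this]
  simp_rw [eq_comm]

theorem sum_Iic_prod_choose_mul {R : Type*} [CommSemiring R] (ν : ι → ℕ) (f : ℕ → R) :
    ∑ m ∈ Iic ν, (∏ j, ((ν j).choose (m j) : R)) * f (∑ j, m j) =
      ∑ i ∈ range (∑ j, ν j + 1), ((∑ j, ν j).choose i : R) * f i := by
  have hmaps : ∀ m ∈ Iic ν, ∑ j, m j ∈ range (∑ j, ν j + 1) := fun m hm =>
    mem_range_succ_iff.2 (sum_le_sum fun j _ => mem_Iic.1 hm j)
  rw [← sum_fiberwise_of_maps_to hmaps]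
  refine sum_congr rfl fun i _ => ?_
  rw [← sum_Iic_filter_prod_choose ν i, Nat.cast_sum, sum_mul]
  refine sum_congr rfl fun m hm => ?_
  rw [(mem_filter.1 hm).2, Nat.cast_prod]

theorem sum_Iic_erase_prod_choose_mul {R : Type*} [CommRing R] (ν : ι → ℕ) (f : ℕ → R) :
    ∑ m ∈ (Iic ν).erase ν, (∏ j, ((ν j).choose (m j) : R)) * f (∑ j, m j) =
      ∑ i ∈ range (∑ j, ν j), ((∑ j, ν j).choose i : R) * f i := by
  have h := sum_Iic_prod_choose_mul ν f
  rw [← add_sum_erase _ _ (mem_Iic.2 le_rfl), sum_range_succ, add_comm] at h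
  simpa using h

end

theorem prod_pow_sub_mul_prod_pow {M ι : Type*} [CommMonoid M] [Fintype ι] (b : ι → M)
    {m ν : ι → ℕ} (h : m ≤ ν) :
    (∏ j, b j ^ (ν j - m j)) * ∏ j, b j ^ m j = ∏ j, b j ^ ν j := by
  rw [← prod_mul_distrib]
  exact prod_congr rfl fun j _ => by rw [← pow_add, Nat.sub_add_cancel (h j)]

theorem stmt14_general (s : ℕ) (b : Fin s → ℝ) (hb : ∀ j, 0 ≤ b j)
    (Λ : ℕ → ℝ) (h0 : Λ 0 = 1)
    (hrec : ∀ n : ℕ, 1 ≤ n → Λ n = ∑ i ∈ Finset.range n, (n.choose i : ℝ) * Λ i)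
    (N : (Fin s → ℕ) → ℝ)
    (hrecN : ∀ ν : Fin s → ℕ, ν ≠ 0 →
      N ν ≤ ∑ m ∈ (Finset.Iic ν).erase ν,
        (∏ j, ((ν j).choose (m j) : ℝ)) * (∏ j, b j ^ (ν j - m j)) * N m)
    (ν : Fin s → ℕ) :
    N ν ≤ Λ (∑ j, ν j) * (∏ j, b j ^ ν j) * N 0 := by
  induction ν using WellFoundedLT.induction with | _ ν ih
  rcases eq_or_ne ν 0 with rfl | hν
  · simp [h0]
  have hsum : ∑ j, ν j ≠ 0 := by simpa [sum_eq_zero_iff, funext_iff] using hν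
  calc N ν ≤ ∑ m ∈ (Iic ν).erase ν,
        (∏ j, ((ν j).choose (m j) : ℝ)) * (∏ j, b j ^ (ν j - m j)) * N m := hrecN ν hν
    _ ≤ ∑ m ∈ (Iic ν).erase ν,
          (∏ j, ((ν j).choose (m j) : ℝ)) * (∏ j, b j ^ (ν j - m j)) *
            (Λ (∑ j, m j) * (∏ j, b j ^ m j) * N 0) := by
      refine sum_le_sum fun m hm => mul_le_mul_of_nonneg_left ?_ ?_
      · obtain ⟨hne, hle⟩ := mem_erase.1 hm
        exact ih m (lt_of_le_of_ne (mem_Iic.1 hle) hne)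
      · exact mul_nonneg (prod_nonneg fun j _ => Nat.cast_nonneg _)
          (prod_nonneg fun j _ => pow_nonneg (hb j) _)
    _ = (∑ m ∈ (Iic ν).erase ν, (∏ j, ((ν j).choose (m j) : ℝ)) * Λ (∑ j, m j)) *
          (∏ j, b j ^ ν j) * N 0 := by
      rw [sum_mul, sum_mul]
      refine sum_congr rfl fun m hm => ?_
      rw [← prod_pow_sub_mul_prod_pow b (mem_Iic.1 (mem_of_mem_erase hm))]
      ring
    _ = Λ (∑ j, ν j) * (∏ j, b j ^ ν j) * N 0 := by
      rw [sum_Iic_erase_prod_choose_mul, hrec _ (Nat.one_le_iff_ne_zero.2 hsum)]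

theorem stmt14 (s : ℕ) (hs : 1 ≤ s) (b : Fin s → ℝ) (hb : ∀ j, 0 ≤ b j)
    (Λ : ℕ → ℝ) (h0 : Λ 0 = 1)
    (hrec : ∀ n : ℕ, 1 ≤ n → Λ n = ∑ i ∈ Finset.range n, (n.choose i : ℝ) * Λ i)
    (N : (Fin s → ℕ) → ℝ) (hN : ∀ ν, 0 ≤ N ν)
    (hrecN : ∀ ν : Fin s → ℕ, ν ≠ 0 →
      N ν ≤ ∑ m ∈ (Finset.Iic ν).erase ν,
        (∏ j, ((ν j).choose (m j) : ℝ)) * (∏ j, b j ^ (ν j - m j)) * N m)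
    (ν : Fin s → ℕ) :
    N ν ≤ Λ (∑ j, ν j) * (∏ j, b j ^ ν j) * N 0 :=
  stmt14_general s b hb Λ h0 hrec N hrecN ν
end

section
/- For integers m ≥ 1 and d ≥ 1, set s = (2m)^d. Let r : (ℤ/2mℤ)^d → ℝ satisfy the evenness condition r(−k) = r(k) for all k, and let R be the s × s real matrix indexed by k, k' ∈ {0,…,2m−1}^d with entries R_{k,k'} = r(k − k'), the difference taken componentwise modulo 2m. For each k define λ_k = ∑_{k' ∈ {0,…,2m−1}^d} r(k') exp(2πi (k·k')/(2m)). Then every λ_k is a real number, and R = Q Λ Q, where Λ is the diagonal matrix with diagonal entries λ_k and Q = Re(F) + Im(F) for the d-dimensional Fourier matrix F with entries F_{k,k'} = (1/√s) exp(2πi (k·k')/(2m)). -/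
/-!
Write `E k k' = ψ (k ⬝ᵥ k')` for the unnormalised Fourier matrix (`ψ` the standard character
of `ZMod N`) and `J` for the permutation matrix of `k ↦ -k`. Orthogonality of characters gives
the circulant diagonalisation `Eᴴ * diagonal (E *ᵥ r) * E = N ^ d • circulant r`.

Since `Re z + Im z = a z + b z̄` with `a = (1 - i) / 2`, `b = (1 + i) / 2`, and entrywise
conjugation of `E` is `J * E`, the matrix with entries `Re + Im` of `E` is `P * E` with
`P = a + b J`. From `a² + b² = 0` and `2ab = 1` we get `P * P = J`. When `r` is even, `J`
commutes with `E` and with `Λ = diagonal (E *ᵥ r)`, so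
`(P E) Λ (P E) = P² E Λ E = J E Λ E = Eᴴ Λ E`. The eigenvalues are real because
`conj λ_k = λ_{-k} = λ_k`.
-/

open Complex Matrix ComplexConjugate

namespace ZMod

variable {N : ℕ} [NeZero N]

lemma conj_stdAddChar (j : ZMod N) : conj (stdAddChar j) = stdAddChar (-j) := by
  rw [stdAddChar_apply, stdAddChar_apply, ← Circle.coe_inv_eq_conj, AddChar.map_neg_eq_inv]

variable {ι : Type*} [Fintype ι]

lemma cexp_natCast_sum_val_mul_val (k k' : ι → ZMod N) :
    exp (2 * Real.pi * I * ((∑ j, (k j).val * (k' j).val : ℕ) : ℂ) / (N : ℂ)) =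
      stdAddChar (k ⬝ᵥ k') := by
  have h := stdAddChar_coe (N := N) (∑ j, (k j).val * (k' j).val : ℕ)
  push_cast [natCast_zmod_val] at h ⊢
  exact h.symm

lemma sum_stdAddChar_dotProduct [DecidableEq ι] (g : ι → ZMod N) :
    ∑ k : ι → ZMod N, stdAddChar (k ⬝ᵥ g) =
      if g = 0 then (N ^ Fintype.card ι : ℂ) else 0 := by
  split_ifs with hg
  · simp [hg, ZMod.card]
  obtain ⟨j, hj⟩ := Function.ne_iff.mp hg
  obtain ⟨x, hx⟩ := AddChar.ne_one_iff.mp (isPrimitive_stdAddChar N hj)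
  rw [AddChar.mulShift_apply] at hx
  refine eq_zero_of_mul_eq_self_left (b := stdAddChar (Pi.single j x ⬝ᵥ g)) ?_ ?_
  · rwa [single_dotProduct, mul_comm]
  rw [Finset.mul_sum]
  exact Fintype.sum_equiv (Equiv.addLeft (Pi.single j x)) _ _ fun k => by
    simp [add_dotProduct, AddChar.map_add_eq_mul]

end ZMod

section NegPermMatrix

variable {G : Type*} [AddGroup G] [Fintype G] [DecidableEq G]

lemma permMatrix_neg_mul_self :
    (Equiv.neg G).permMatrix ℂ * (Equiv.neg G).permMatrix ℂ = 1 := by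
  ext k k'
  simp [PEquiv.toMatrix_toPEquiv_mul, one_apply]

lemma commute_permMatrix_neg_diagonal {v : G → ℂ} (hv : ∀ k, v (-k) = v k) :
    Commute ((Equiv.neg G).permMatrix ℂ) (diagonal v) := by
  ext k k'
  by_cases h : -k = k'
  · subst h
    simp [hv]
  · simp [h]

end NegPermMatrix

open ZMod

variable {N : ℕ} [NeZero N] {ι : Type*} [Fintype ι]

variable (N ι) in
noncomputable def dftMatrix : Matrix (ι → ZMod N) (ι → ZMod N) ℂ :=
  of fun k k' => stdAddChar (k ⬝ᵥ k')

@[simp] lemma dftMatrix_apply (k k' : ι → ZMod N) :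
    dftMatrix N ι k k' = stdAddChar (k ⬝ᵥ k') := rfl

variable [DecidableEq ι]

lemma dftMatrix_mulVec_neg {v : (ι → ZMod N) → ℂ} (hv : ∀ k, v (-k) = v k)
    (k : ι → ZMod N) :
    (dftMatrix N ι *ᵥ v) (-k) = (dftMatrix N ι *ᵥ v) k := by
  simp only [mulVec, dotProduct, dftMatrix_apply]
  exact Fintype.sum_equiv (Equiv.neg _) _ _ fun t => by simp [hv]

lemma conj_dftMatrix_mulVec_ofReal (v : (ι → ZMod N) → ℝ) (k : ι → ZMod N) :
    conj ((dftMatrix N ι *ᵥ fun t => (v t : ℂ)) k) =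
      (dftMatrix N ι *ᵥ fun t => (v t : ℂ)) (-k) := by
  simp [mulVec, dotProduct, conj_stdAddChar]

lemma permMatrix_neg_mul_dftMatrix :
    (Equiv.neg _).permMatrix ℂ * dftMatrix N ι = (dftMatrix N ι)ᴴ := by
  ext k k'
  simp [PEquiv.toMatrix_toPEquiv_mul, conj_stdAddChar, dotProduct_comm k']

lemma commute_permMatrix_neg_dftMatrix :
    Commute ((Equiv.neg _).permMatrix ℂ) (dftMatrix N ι) := by
  ext k k'
  simp [PEquiv.toMatrix_toPEquiv_mul, PEquiv.mul_toMatrix_toPEquiv]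

lemma conjTranspose_dftMatrix_mul_diagonal_mul_dftMatrix (v : (ι → ZMod N) → ℂ) :
    (dftMatrix N ι)ᴴ * diagonal (dftMatrix N ι *ᵥ v) * dftMatrix N ι =
      (N ^ Fintype.card ι : ℂ) • circulant v := by
  ext k k''
  calc ((dftMatrix N ι)ᴴ * diagonal (dftMatrix N ι *ᵥ v) * dftMatrix N ι) k k''
      = ∑ t, v t * ∑ k', stdAddChar (k' ⬝ᵥ (t - k + k'')) := by
        have hdft (k' : ι → ZMod N) :
            (dftMatrix N ι *ᵥ v) k' = ∑ t, stdAddChar (k' ⬝ᵥ t) * v t := rfl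
        rw [mul_apply]
        simp only [mul_diagonal, conjTranspose_apply, dftMatrix_apply, hdft, Finset.mul_sum,
          Finset.sum_mul]
        rw [Finset.sum_comm]
        refine Finset.sum_congr rfl fun t _ => Finset.sum_congr rfl fun k' _ => ?_
        rw [star_def, conj_stdAddChar, dotProduct_add, dotProduct_sub, sub_eq_add_neg,
          AddChar.map_add_eq_mul, AddChar.map_add_eq_mul, dotProduct_comm k', dotProduct_comm k k']
        ring
    _ = ((N ^ Fintype.card ι : ℂ) • circulant v) k k'' := by
        simp_rw [sum_stdAddChar_dotProduct]
        simp [add_eq_zero_iff_eq_neg, sub_eq_iff_eq_add, mul_comm, neg_add_eq_sub]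

section HartleyFactor

variable {A : Type*} [Ring A] [Algebra ℂ A]

noncomputable def hartleyFactor (J : A) : A := ((1 - I) / 2) • 1 + ((1 + I) / 2) • J

lemma hartleyFactor_mul_self {J : A} (hJ : J * J = 1) : hartleyFactor J * hartleyFactor J = J := by
  simp only [hartleyFactor, add_mul, mul_add, smul_mul_smul, one_mul, mul_one, hJ]
  linear_combination (norm := module) I_sq • ((1 / 2 : ℂ) • (1 : A) - (1 / 2 : ℂ) • J)

lemma Commute.hartleyFactor_left {J X : A} (h : Commute J X) : Commute (hartleyFactor J) X :=
  ((Commute.one_left X).smul_left _).add_left (h.smul_left _)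

end HartleyFactor

lemma Complex.ofReal_re_add_im (z : ℂ) :
    ((z.re + z.im : ℝ) : ℂ) = (1 - I) / 2 * z + (1 + I) / 2 * conj z := by
  apply Complex.ext <;> simp <;> ring

variable (N ι) in
noncomputable def casMatrix : Matrix (ι → ZMod N) (ι → ZMod N) ℂ :=
  (dftMatrix N ι).map fun z => ((z.re + z.im : ℝ) : ℂ)

lemma casMatrix_eq_hartleyFactor_mul :
    casMatrix N ι = hartleyFactor ((Equiv.neg _).permMatrix ℂ) * dftMatrix N ι := by
  ext k k'
  rw [casMatrix, map_apply, ofReal_re_add_im]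
  simp [hartleyFactor, add_mul, PEquiv.toMatrix_toPEquiv_mul, conj_stdAddChar]

lemma casMatrix_mul_diagonal_mul_casMatrix {v : (ι → ZMod N) → ℂ}
    (hv : ∀ k, v (-k) = v k) :
    casMatrix N ι * diagonal (dftMatrix N ι *ᵥ v) * casMatrix N ι =
      (N ^ Fintype.card ι : ℂ) • circulant v := by
  rw [casMatrix_eq_hartleyFactor_mul, ← conjTranspose_dftMatrix_mul_diagonal_mul_dftMatrix,
    ← permMatrix_neg_mul_dftMatrix]
  set J := (Equiv.neg (ι → ZMod N)).permMatrix ℂ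
  set E := dftMatrix N ι
  set D := diagonal (E *ᵥ v)
  have hPE : Commute (hartleyFactor J) E := commute_permMatrix_neg_dftMatrix.hartleyFactor_left
  have hPD : Commute (hartleyFactor J) D :=
    (commute_permMatrix_neg_diagonal (dftMatrix_mulVec_neg hv)).hartleyFactor_left
  calc hartleyFactor J * E * D * (hartleyFactor J * E)
      = hartleyFactor J * (E * (D * hartleyFactor J)) * E := by simp only [mul_assoc]
    _ = hartleyFactor J * hartleyFactor J * E * D * E := by
        rw [← hPD.eq, ← mul_assoc E, ← hPE.eq]; simp only [mul_assoc]
    _ = J * E * D * E := by rw [hartleyFactor_mul_self permMatrix_neg_mul_self]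

lemma smul_casMatrix_mul_diagonal_mul_smul_casMatrix {c : ℂ}
    (hc : c ^ 2 * N ^ Fintype.card ι = 1) {v : (ι → ZMod N) → ℂ}
    (hv : ∀ k, v (-k) = v k) :
    (c • casMatrix N ι) * diagonal (dftMatrix N ι *ᵥ v) * (c • casMatrix N ι) =
      circulant v := by
  rw [smul_mul_assoc, smul_mul_assoc, mul_smul_comm, smul_smul,
    casMatrix_mul_diagonal_mul_casMatrix hv, smul_smul, ← sq, hc, one_smul]

theorem stmt16_general (m d : ℕ) [NeZero m]
    (s : ℕ) (hs : s = (2 * m) ^ d)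
    (r : (Fin d → ZMod (2 * m)) → ℝ) (hr : ∀ k, r (-k) = r k)
    (R : Matrix (Fin d → ZMod (2 * m)) (Fin d → ZMod (2 * m)) ℝ)
    (hR : ∀ k k', R k k' = r (k - k'))
    (lam : (Fin d → ZMod (2 * m)) → ℂ)
    (hlam : ∀ k, lam k = ∑ k', (r k' : ℂ) *
      Complex.exp (2 * Real.pi * Complex.I *
        ((∑ j, (k j).val * (k' j).val : ℕ) : ℂ) / ((2 * m : ℕ) : ℂ)))
    (F : Matrix (Fin d → ZMod (2 * m)) (Fin d → ZMod (2 * m)) ℂ)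
    (hF : ∀ k k', F k k' = ((1 / Real.sqrt s : ℝ) : ℂ) *
      Complex.exp (2 * Real.pi * Complex.I *
        ((∑ j, (k j).val * (k' j).val : ℕ) : ℂ) / ((2 * m : ℕ) : ℂ)))
    (Q : Matrix (Fin d → ZMod (2 * m)) (Fin d → ZMod (2 * m)) ℝ)
    (hQ : ∀ k k', Q k k' = (F k k').re + (F k k').im) :
    (∀ k, (lam k).im = 0) ∧
    R = Q * Matrix.diagonal (fun k => (lam k).re) * Q := by
  simp only [cexp_natCast_sum_val_mul_val (N := 2 * m), ← dftMatrix_apply] at hlam hF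
  set c : ℝ := 1 / Real.sqrt s
  set r' : (Fin d → ZMod (2 * m)) → ℂ := fun t => (r t : ℂ)
  have hlam' : lam = dftMatrix (2 * m) (Fin d) *ᵥ r' := by
    ext k
    simp [hlam, mulVec, dotProduct, mul_comm, r']
  have hr' (k) : r' (-k) = r' k := by simp [r', hr]
  have him (k : Fin d → ZMod (2 * m)) : (lam k).im = 0 := by
    rw [← conj_eq_iff_im, hlam', conj_dftMatrix_mulVec_ofReal, dftMatrix_mulVec_neg hr']
  have hQ' : Q.map ofRealHom = (c : ℂ) • casMatrix (2 * m) (Fin d) := by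
    ext k k'
    simp only [map_apply, hQ, hF, casMatrix, Matrix.smul_apply, re_ofReal_mul, im_ofReal_mul,
      smul_eq_mul, ofRealHom_eq_coe]
    push_cast
    ring
  have hc : (c : ℂ) ^ 2 * ((2 * m : ℕ) : ℂ) ^ Fintype.card (Fin d) = 1 := by
    have hs0 : (s : ℂ) ≠ 0 := by simp [hs, NeZero.ne m]
    rw [Fintype.card_fin, ← Nat.cast_pow, ← hs, ← ofReal_pow, div_pow, one_pow,
      Real.sq_sqrt s.cast_nonneg]
    push_cast
    field_simp
  refine ⟨him, map_injective ofRealHom.injective ?_⟩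
  calc R.map ofRealHom = circulant r' := by ext; simp [hR, r']
    _ = ((c : ℂ) • casMatrix (2 * m) (Fin d)) * diagonal lam *
          ((c : ℂ) • casMatrix (2 * m) (Fin d)) := by
        rw [hlam', smul_casMatrix_mul_diagonal_mul_smul_casMatrix hc hr']
    _ = (Q * diagonal (fun k => (lam k).re) * Q).map ofRealHom := by
        rw [Matrix.map_mul, Matrix.map_mul, hQ', diagonal_map (map_zero _)]
        congr
        ext k
        exact Complex.ext (by simp) (by simp [him])

theorem stmt16 (m d : ℕ) [NeZero m] (hd : 1 ≤ d)
    (s : ℕ) (hs : s = (2 * m) ^ d)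
    (r : (Fin d → ZMod (2 * m)) → ℝ) (hr : ∀ k, r (-k) = r k)
    (R : Matrix (Fin d → ZMod (2 * m)) (Fin d → ZMod (2 * m)) ℝ)
    (hR : ∀ k k', R k k' = r (k - k'))
    (lam : (Fin d → ZMod (2 * m)) → ℂ)
    (hlam : ∀ k, lam k = ∑ k', (r k' : ℂ) *
      Complex.exp (2 * Real.pi * Complex.I *
        ((∑ j, (k j).val * (k' j).val : ℕ) : ℂ) / ((2 * m : ℕ) : ℂ)))
    (F : Matrix (Fin d → ZMod (2 * m)) (Fin d → ZMod (2 * m)) ℂ)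
    (hF : ∀ k k', F k k' = ((1 / Real.sqrt s : ℝ) : ℂ) *
      Complex.exp (2 * Real.pi * Complex.I *
        ((∑ j, (k j).val * (k' j).val : ℕ) : ℂ) / ((2 * m : ℕ) : ℂ)))
    (Q : Matrix (Fin d → ZMod (2 * m)) (Fin d → ZMod (2 * m)) ℝ)
    (hQ : ∀ k k', Q k k' = (F k k').re + (F k k').im) :
    (∀ k, (lam k).im = 0) ∧
    R = Q * Matrix.diagonal (fun k => (lam k).re) * Q :=
  stmt16_general m d s hs r hr R hR lam hlam F hF Q hQ
end

section
/- Let κ ∈ (1/2, 1), set p = 2κ/(1+κ), and let c > 0 and K ≥ 0. Then the series C := ∑_{ℓ=0}^∞ (ℓ!)^{p−1} (c^{p/2} K)^ℓ converges, and for every finite set S and every family (b_j)_{j∈S} of nonnegative reals with ∑_{j∈S} b_j^p ≤ K, one has ∑_{u ⊆ S} ((|u|!)² ∏_{j∈u} (c b_j²))^{κ/(1+κ)} ≤ C, where the sum is over all subsets u of S (the empty subset contributing 1). In particular the left-hand side is bounded independently of the cardinality of S. -/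
/-!
Since κ/(1+κ) = p/2, the term of a subset u with |u| = ℓ equals (ℓ!)^(p-1) · ℓ! ∏_{j∈u} a_j with
a_j = c^(p/2) b_j^p. Each ℓ-subset occurs ℓ! times among the monomials of (∑_j a_j)^ℓ, so
ℓ! e_ℓ(a) ≤ (∑_j a_j)^ℓ ≤ (c^(p/2) K)^ℓ, and summing over ℓ bounds the left-hand side by the
series. The series converges by the ratio test: the ratio is (ℓ+1)^(p-1) c^(p/2) K → 0, as p < 1.
-/

open Finset Real Filter Topology
open scoped Nat

lemma pow_succ_add_mul_pow_le_add_pow {T a : ℝ} (hT : 0 ≤ T) (ha : 0 ≤ a) (m : ℕ) :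
    T ^ (m + 1) + (m + 1) * a * T ^ m ≤ (T + a) ^ (m + 1) := by
  induction m with
  | zero => simp
  | succ m ih =>
    push_cast
    calc T ^ (m + 2) + (m + 1 + 1) * a * T ^ (m + 1)
        ≤ T ^ (m + 2) + (m + 1 + 1) * a * T ^ (m + 1) + (m + 1) * a ^ 2 * T ^ m :=
          le_add_of_nonneg_right (by positivity)
      _ = (T + a) * (T ^ (m + 1) + (m + 1) * a * T ^ m) := by ring
      _ ≤ (T + a) * (T + a) ^ (m + 1) := by gcongr
      _ = (T + a) ^ (m + 2) := by ring

namespace Multiset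

lemma esymm_cons_succ {R : Type*} [CommSemiring R] (x : R) (s : Multiset R) (n : ℕ) :
    (x ::ₘ s).esymm (n + 1) = s.esymm (n + 1) + x * s.esymm n := by
  simp [esymm, map_map, prod_cons, ← sum_map_mul_left]

lemma factorial_mul_esymm_le_sum_pow {s : Multiset ℝ} (hs : ∀ x ∈ s, 0 ≤ x) (n : ℕ) :
    n ! * s.esymm n ≤ s.sum ^ n := by
  induction s using Multiset.induction_on generalizing n with
  | empty => cases n <;> simp [esymm, powersetCard_zero_right]
  | cons x s ih =>
    have hx : 0 ≤ x := hs x (mem_cons_self x s)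
    have hs' : ∀ y ∈ s, 0 ≤ y := fun y hy => hs y (mem_cons_of_mem hy)
    cases n with
    | zero => simp [esymm]
    | succ m =>
      rw [esymm_cons_succ, sum_cons]
      calc ((m + 1)! : ℝ) * (s.esymm (m + 1) + x * s.esymm m)
          = (m + 1)! * s.esymm (m + 1) + (m + 1) * x * (m ! * s.esymm m) := by
            push_cast [Nat.factorial_succ]; ring
        _ ≤ s.sum ^ (m + 1) + (m + 1) * x * s.sum ^ m := by
            gcongr
            exacts [ih hs' _, ih hs' _]
        _ ≤ (s.sum + x) ^ (m + 1) :=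
            pow_succ_add_mul_pow_le_add_pow (sum_nonneg hs') hx m
        _ = (x + s.sum) ^ (m + 1) := by rw [add_comm]

end Multiset

lemma Finset.factorial_mul_sum_powersetCard_prod_le_sum_pow {ι : Type*} {S : Finset ι}
    {a : ι → ℝ} (ha : ∀ j ∈ S, 0 ≤ a j) (n : ℕ) :
    n ! * ∑ u ∈ S.powersetCard n, ∏ j ∈ u, a j ≤ (∑ j ∈ S, a j) ^ n := by
  rw [← Finset.esymm_map_val, Finset.sum_eq_multiset_sum]
  exact Multiset.factorial_mul_esymm_le_sum_pow (by simpa using ha) n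

lemma summable_factorial_rpow_mul_pow {s : ℝ} (hs : s < 0) (x : ℝ) :
    Summable fun n : ℕ => (n ! : ℝ) ^ s * x ^ n := by
  have hratio : Tendsto (fun n : ℕ => ((n : ℝ) + 1) ^ s * |x|) atTop (𝓝 0) := by
    have h := (tendsto_rpow_neg_atTop (neg_pos.2 hs)).comp
      (tendsto_atTop_add_const_right _ 1 tendsto_natCast_atTop_atTop)
    simpa [Function.comp_def] using h.mul_const |x|
  refine summable_of_ratio_norm_eventually_le (r := 1 / 2) (by norm_num) ?_
  filter_upwards [hratio.eventually_le_const (by norm_num : (0 : ℝ) < 1 / 2)] with n hn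
  have hfac : ((n + 1)! : ℝ) ^ s = ((n : ℝ) + 1) ^ s * (n ! : ℝ) ^ s := by
    rw [Nat.factorial_succ, Nat.cast_mul, mul_rpow (by positivity) (by positivity)]
    push_cast; ring
  calc ‖((n + 1)! : ℝ) ^ s * x ^ (n + 1)‖
      = ((n : ℝ) + 1) ^ s * |x| * ‖(n ! : ℝ) ^ s * x ^ n‖ := by
        simp only [hfac, pow_succ, norm_mul, norm_pow, Real.norm_eq_abs]
        rw [abs_of_nonneg (by positivity), abs_of_nonneg (by positivity)]
        ring
    _ ≤ 1 / 2 * ‖(n ! : ℝ) ^ s * x ^ n‖ := by gcongr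

lemma Finset.sum_powerset_factorial_rpow_mul_prod_le_tsum {ι : Type*} {S : Finset ι}
    {a : ι → ℝ} (ha : ∀ j ∈ S, 0 ≤ a j) {s x : ℝ} (hx : ∑ j ∈ S, a j ≤ x)
    (hsum : Summable fun n : ℕ => (n ! : ℝ) ^ s * x ^ n) :
    ∑ u ∈ S.powerset, (u.card ! : ℝ) ^ s * (u.card ! * ∏ j ∈ u, a j)
      ≤ ∑' n : ℕ, (n ! : ℝ) ^ s * x ^ n := by
  have hS : 0 ≤ ∑ j ∈ S, a j := sum_nonneg ha
  rw [sum_powerset]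
  calc ∑ n ∈ range (S.card + 1), ∑ u ∈ S.powersetCard n,
        (u.card ! : ℝ) ^ s * (u.card ! * ∏ j ∈ u, a j)
      = ∑ n ∈ range (S.card + 1),
          (n ! : ℝ) ^ s * (n ! * ∑ u ∈ S.powersetCard n, ∏ j ∈ u, a j) := by
        refine sum_congr rfl fun n _ => ?_
        rw [mul_sum, mul_sum]
        refine sum_congr rfl fun u hu => ?_
        rw [(mem_powersetCard.1 hu).2]
    _ ≤ ∑ n ∈ range (S.card + 1), (n ! : ℝ) ^ s * x ^ n := by
        gcongr with n
        exact (factorial_mul_sum_powersetCard_prod_le_sum_pow ha n).trans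
          (pow_le_pow_left₀ hS hx n)
    _ ≤ ∑' n : ℕ, (n ! : ℝ) ^ s * x ^ n :=
        hsum.sum_le_tsum _ fun n _ => by have := hS.trans hx; positivity

lemma rpow_factorial_sq_mul_prod_eq {ι : Type*} (u : Finset ι) {c : ℝ} (hc : 0 ≤ c)
    {b : ι → ℝ} (hb : ∀ j, 0 ≤ b j) (n : ℕ) (p : ℝ) :
    ((n ! : ℝ) ^ 2 * ∏ j ∈ u, (c * b j ^ 2)) ^ (p / 2)
      = (n ! : ℝ) ^ (p - 1) * (n ! * ∏ j ∈ u, (c ^ (p / 2) * b j ^ p)) := by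
  have hsq : ∀ {y : ℝ}, 0 ≤ y → (y ^ 2) ^ (p / 2) = y ^ p := fun hy => by
    rw [← rpow_natCast_mul hy]; congr 1; push_cast; ring
  have hn : (0 : ℝ) < n ! := by positivity
  rw [mul_rpow (by positivity) (prod_nonneg fun j _ => by positivity), hsq hn.le,
    ← finsetProd_rpow _ _ fun j _ => by positivity]
  simp only [mul_rpow hc (sq_nonneg _), hsq (hb _)]
  rw [← mul_assoc, ← rpow_add_one hn.ne', sub_add_cancel]

theorem stmt19_general {ι : Type*} (κ : ℝ) (hκ1 : 1 / 2 < κ) (hκ2 : κ < 1)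
    (p : ℝ) (hp : p = 2 * κ / (1 + κ)) (c K : ℝ) (hc : 0 < c) :
    Summable (fun ℓ : ℕ => (ℓ.factorial : ℝ) ^ (p - 1) * (c ^ (p / 2) * K) ^ ℓ) ∧
    ∀ (S : Finset ι) (b : ι → ℝ), (∀ j, 0 ≤ b j) → (∑ j ∈ S, b j ^ p) ≤ K →
      ∑ u ∈ S.powerset,
          ((u.card.factorial : ℝ) ^ 2 * ∏ j ∈ u, (c * b j ^ 2)) ^ (κ / (1 + κ))
        ≤ ∑' ℓ : ℕ, (ℓ.factorial : ℝ) ^ (p - 1) * (c ^ (p / 2) * K) ^ ℓ := by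
  have hp1 : p - 1 < 0 := by
    rw [hp, sub_neg, div_lt_one (by linarith)]; linarith
  have hsum := summable_factorial_rpow_mul_pow hp1 (c ^ (p / 2) * K)
  refine ⟨hsum, fun S b hb hbK => ?_⟩
  have hexp : κ / (1 + κ) = p / 2 := by rw [hp]; ring
  have haK : ∑ j ∈ S, c ^ (p / 2) * b j ^ p ≤ c ^ (p / 2) * K := by
    rw [← mul_sum]; gcongr
  simp only [hexp, rpow_factorial_sq_mul_prod_eq _ hc.le hb]
  exact sum_powerset_factorial_rpow_mul_prod_le_tsum 
    (fun j _ => mul_nonneg (rpow_nonneg hc.le _) (rpow_nonneg (hb j) _)) haK hsum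

theorem stmt19 {ι : Type*} (κ : ℝ) (hκ1 : 1 / 2 < κ) (hκ2 : κ < 1)
    (p : ℝ) (hp : p = 2 * κ / (1 + κ)) (c K : ℝ) (hc : 0 < c) (hK : 0 ≤ K) :
    Summable (fun ℓ : ℕ => (ℓ.factorial : ℝ) ^ (p - 1) * (c ^ (p / 2) * K) ^ ℓ) ∧
    ∀ (S : Finset ι) (b : ι → ℝ), (∀ j, 0 ≤ b j) → (∑ j ∈ S, b j ^ p) ≤ K →
      ∑ u ∈ S.powerset,
          ((u.card.factorial : ℝ) ^ 2 * ∏ j ∈ u, (c * b j ^ 2)) ^ (κ / (1 + κ))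
        ≤ ∑' ℓ : ℕ, (ℓ.factorial : ℝ) ^ (p - 1) * (c ^ (p / 2) * K) ^ ℓ :=
  stmt19_general κ hκ1 hκ2 p hp c K hc
end
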